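/- arXiv:2303.01599 — 5 statements merged into one kernel-verified Lean document; each statement's English description precedes it below -/
import Mathlib

section
/- Let p₁, ..., pₘ be independent random variables where for indices j in a null set H ⊆ [m], pⱼ takes values in {1/2, 1} with P(pⱼ = 1/2) ≤ 1/2, and the pⱼ for j ∉ H are arbitrary (independent of the nulls). Define V⁺(k) = #{j ≤ k : pⱼ ≤ 1/2, j ∈ H} and V⁻(k) = #{j ≤ k : pⱼ > 1/2, j ∈ H}, and M(k) = V⁺(k)/(1 + V⁻(k)). Then M(k) is a supermartingale running backward in time with respect to the filtration F_k generated by all non-null p-values and the values V±(k') for k' ≥ k; consequently for any stopping time k̂ with respect to this backward filtration, E[M(k̂)] ≤ E[M(m)]. -/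
open MeasureTheory Finset
open scoped Classical

variable {Ω : Type*}

/-- `V⁺(k)` : number of null indices `j ≤ k` with `pⱼ ≤ 1/2`. -/
noncomputable def Vplus {m : ℕ} (H : Finset (Fin m)) (p : Fin m → Ω → ℝ)
    (k : ℕ) (ω : Ω) : ℕ :=
  (H.filter (fun j => j.val < k ∧ p j ω ≤ 1/2)).card

/-- `V⁻(k)` : number of null indices `j ≤ k` with `pⱼ > 1/2`. -/
noncomputable def Vminus {m : ℕ} (H : Finset (Fin m)) (p : Fin m → Ω → ℝ)
    (k : ℕ) (ω : Ω) : ℕ :=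
  (H.filter (fun j => j.val < k ∧ 1/2 < p j ω)).card

/-- `M(k) = V⁺(k) / (1 + V⁻(k))`. -/
noncomputable def Mart {m : ℕ} (H : Finset (Fin m)) (p : Fin m → Ω → ℝ)
    (k : ℕ) (ω : Ω) : ℝ :=
  (Vplus H p k ω : ℝ) / (1 + (Vminus H p k ω : ℝ))

/-- The backward filtration `F_k`, generated by all non-null p-values together with
`V±(k')` for all `k' ≥ k`. -/
noncomputable def Filt [MeasurableSpace Ω] {m : ℕ} (H : Finset (Fin m))
    (p : Fin m → Ω → ℝ) (k : ℕ) : MeasurableSpace Ω :=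
  MeasurableSpace.comap
    (fun ω => ((fun j : {j : Fin m // j ∉ H} => p j.val ω),
               (fun k' : {k' : ℕ // k ≤ k'} =>
                  (Vplus H p k'.val ω, Vminus H p k'.val ω))))
    inferInstance

/-!
Let `j₀ : Fin m` be the index with `j₀.val = k - 1` (the paper's `k`-th hypothesis), and write
`a = V⁺(k)`, `b = V⁻(k)`. If `j₀` is non-null, `M(k - 1) = M(k)`. Otherwise, given `F_k`, the null
p-values with index `< k` are exchangeable, so `p j₀` is a uniformly chosen one of them:
`M(k - 1) = (a - 1)/(1 + b)` with probability `a/(a + b)` and `M(k - 1) = a/b` otherwise, whence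
`E[M(k - 1) | F_k] = a/(1 + b) = M(k)` if `b > 0`, and `≤ a = M(k)` if `b = 0`.

Formally, exchangeability enters through the transpositions `(j j₀)` of null indices below `k`:
by independence and equality of the null marginals they preserve the joint law of `p`, and they fix
every `F_k`-event. The increment `M(k) - M(k - 1)` is bounded below by a sum of terms that change
sign under such a transposition, hence integrate to zero over every `F_k`-event. Optional stopping
for the forward supermartingale `i ↦ M(m - i)` gives the second claim.
-/

open ProbabilityTheory

section Counting

variable {m : ℕ} (H : Finset (Fin m))

lemma card_filter_lt_succ {P : Fin m → Prop} [DecidablePred P] {j₀ : Fin m} (hj₀ : j₀ ∈ H) :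
    #(H.filter fun j => j.val < j₀.val + 1 ∧ P j)
      = #(H.filter fun j => j.val < j₀.val ∧ P j) + if P j₀ then 1 else 0 := by
  have hcongr : ∀ j ∈ H.erase j₀, (j.val < j₀.val + 1 ∧ P j) ↔ (j.val < j₀.val ∧ P j) := by
    intro j hj
    have : j.val ≠ j₀.val := Fin.val_ne_of_ne (ne_of_mem_erase hj)
    constructor <;> rintro ⟨h, hP⟩ <;> exact ⟨by omega, hP⟩
  rw [card_filter, card_filter, ← add_sum_erase H _ hj₀, ← add_sum_erase H _ hj₀,
    sum_congr rfl fun j hj => if_congr (hcongr j hj) rfl rfl]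
  simp only [Nat.lt_succ_self, lt_irrefl, true_and, false_and, if_false]
  omega

lemma card_filter_lt_succ_of_forall_ne {P : Fin m → Prop} [DecidablePred P] {n : ℕ}
    (hn : ∀ j ∈ H, j.val ≠ n) :
    #(H.filter fun j => j.val < n + 1 ∧ P j) = #(H.filter fun j => j.val < n ∧ P j) := by
  congr 1
  refine filter_congr fun j hj => ?_
  have := hn j hj
  constructor <;> rintro ⟨h, hP⟩ <;> exact ⟨by omega, hP⟩

lemma card_filter_comp_perm {P : Fin m → Prop} [DecidablePred P] {k : ℕ} {σ : Equiv.Perm (Fin m)}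
    (hσ : ∀ j, σ j ∈ H.filter (·.val < k) ↔ j ∈ H.filter (·.val < k)) :
    #(H.filter fun j => j.val < k ∧ P (σ j)) = #(H.filter fun j => j.val < k ∧ P j) :=
  card_equiv σ fun j => by simpa [and_assoc] using and_congr_left fun _ => (hσ j).symm

end Counting

lemma Equiv.swap_apply_mem_iff {α : Type*} [DecidableEq α] {s : Finset α} {a b : α} (ha : a ∈ s)
    (hb : b ∈ s) (i : α) : Equiv.swap a b i ∈ s ↔ i ∈ s := by
  rw [Equiv.swap_apply_def]
  split_ifs <;> subst_vars <;> simp [ha, hb]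

section Increments

variable {m : ℕ} (H : Finset (Fin m)) (p : Fin m → Ω → ℝ)

lemma mart_succ_of_forall_ne {n : ℕ} (hn : ∀ j ∈ H, j.val ≠ n) : Mart H p (n + 1) = Mart H p n := by
  funext ω
  simp only [Mart, Vplus, Vminus, card_filter_lt_succ_of_forall_ne H hn]

/-- Antisymmetric under exchanging `p j₀` and `p j`, hence of zero integral over `F_k`-events.
Summed over `j`, it is the increment `M(k) - M(k - 1)`, except when `V⁻(k) = 0`: there the weight
is `0⁻¹ = 0` and the sum is smaller. -/
noncomputable def exchangeTerm (k : ℕ) (j₀ j : Fin m) (ω : Ω) : ℝ :=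
  ((Vminus H p k ω * (Vminus H p k ω + 1) : ℕ) : ℝ)⁻¹ *
    ((if p j₀ ω ≤ 1/2 ∧ 1/2 < p j ω then 1 else 0) - (if p j ω ≤ 1/2 ∧ 1/2 < p j₀ ω then 1 else 0))

lemma sum_exchangeTerm_le {j₀ : Fin m} (hj₀ : j₀ ∈ H) (ω : Ω) :
    ∑ j ∈ H.filter (·.val < j₀.val + 1), exchangeTerm H p (j₀.val + 1) j₀ j ω
      ≤ Mart H p (j₀.val + 1) ω - Mart H p j₀.val ω := by
  have hplus : Vplus H p (j₀.val + 1) ω = Vplus H p j₀.val ω + if p j₀ ω ≤ 1/2 then 1 else 0 :=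
    card_filter_lt_succ H hj₀
  have hminus : Vminus H p (j₀.val + 1) ω = Vminus H p j₀.val ω + if 1/2 < p j₀ ω then 1 else 0 :=
    card_filter_lt_succ H hj₀
  have hsum₁ : ∑ j ∈ H.filter (·.val < j₀.val + 1),
      (if p j₀ ω ≤ 1/2 ∧ 1/2 < p j ω then (1 : ℝ) else 0)
        = if p j₀ ω ≤ 1/2 then (Vminus H p (j₀.val + 1) ω : ℝ) else 0 := by
    split_ifs with h
    · simp only [h, true_and, sum_boole, filter_filter]; rfl
    · exact sum_eq_zero fun j _ => if_neg fun hc => h hc.1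
  have hsum₂ : ∑ j ∈ H.filter (·.val < j₀.val + 1),
      (if p j ω ≤ 1/2 ∧ 1/2 < p j₀ ω then (1 : ℝ) else 0)
        = if 1/2 < p j₀ ω then (Vplus H p (j₀.val + 1) ω : ℝ) else 0 := by
    split_ifs with h
    · simp only [h, and_true, sum_boole, filter_filter]; rfl
    · exact sum_eq_zero fun j _ => if_neg fun hc => h hc.2
  simp only [exchangeTerm, ← mul_sum, sum_sub_distrib, hsum₁, hsum₂, Mart, hplus, hminus]
  generalize Vplus H p j₀.val ω = a
  generalize Vminus H p j₀.val ω = b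
  by_cases hA : p j₀ ω ≤ 1/2
  · simp only [hA, not_lt.2 hA, if_true, if_false, add_zero, Nat.cast_add, Nat.cast_one, sub_zero,
      ← sub_div, add_sub_cancel_left]
    rcases Nat.eq_zero_or_pos b with rfl | hb
    · simp
    · have hb' : (0 : ℝ) < b := by exact_mod_cast hb
      rw [Nat.cast_mul, mul_inv, mul_comm, ← mul_assoc, mul_inv_cancel₀ hb'.ne', one_mul,
        Nat.cast_succ, add_comm, one_div]
  · simp only [hA, not_le.1 hA, if_true, if_false, add_zero]
    apply le_of_eq
    push_cast
    field_simp
    ring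

lemma exchangeTerm_comp_swap {k : ℕ} {j₀ j : Fin m} (hj₀ : j₀ ∈ H.filter (·.val < k))
    (hj : j ∈ H.filter (·.val < k)) (ω : Ω) :
    exchangeTerm H (fun i => p (Equiv.swap j j₀ i)) k j₀ j ω = -exchangeTerm H p k j₀ j ω := by
  have hminus : Vminus H (fun i => p (Equiv.swap j j₀ i)) k ω = Vminus H p k ω :=
    card_filter_comp_perm H (P := fun i => 1/2 < p i ω) (Equiv.swap_apply_mem_iff hj hj₀)
  simp only [exchangeTerm, hminus, Equiv.swap_apply_left, Equiv.swap_apply_right]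
  ring

end Increments

section Measurability

variable [MeasurableSpace Ω] {m : ℕ} (H : Finset (Fin m)) {p : Fin m → Ω → ℝ}

lemma measurable_vplus (hp : ∀ j, Measurable (p j)) (k : ℕ) : Measurable (Vplus H p k) := by
  unfold Vplus
  simp only [card_filter]
  refine Finset.measurable_sum _ fun j _ => Measurable.ite ?_ measurable_const measurable_const
  exact (MeasurableSet.const _).inter (measurableSet_le (hp j) measurable_const)

lemma measurable_vminus (hp : ∀ j, Measurable (p j)) (k : ℕ) : Measurable (Vminus H p k) := by
  unfold Vminus
  simp only [card_filter]
  refine Finset.measurable_sum _ fun j _ => Measurable.ite ?_ measurable_const measurable_const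
  exact (MeasurableSet.const _).inter (measurableSet_lt measurable_const (hp j))

lemma filt_le (hp : ∀ j, Measurable (p j)) (k : ℕ) : Filt H p k ≤ ‹MeasurableSpace Ω› :=
  Measurable.comap_le <| (measurable_pi_lambda _ fun j : {j // j ∉ H} => hp j.val).prodMk <|
    measurable_pi_lambda _ fun k' : {k' // k ≤ k'} =>
      (measurable_vplus H hp k'.val).prodMk (measurable_vminus H hp k'.val)

lemma filt_antitone : Antitone (Filt H p) := by
  rintro k k' hk _ ⟨t, ht, rfl⟩
  refine ⟨(fun q : ({j // j ∉ H} → ℝ) × ({k'' // k ≤ k''} → ℕ × ℕ) =>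
    (q.1, fun k'' : {k'' // k' ≤ k''} => q.2 ⟨k'', hk.trans k''.2⟩)) ⁻¹' t, ?_, rfl⟩
  exact (measurable_fst.prodMk
    (measurable_pi_lambda _ fun _ => (measurable_pi_apply _).comp measurable_snd)) ht

lemma stronglyMeasurable_mart (k : ℕ) : StronglyMeasurable[Filt H p k] (Mart H p k) := by
  refine Measurable.stronglyMeasurable fun s hs =>
    ⟨(fun q : ({j // j ∉ H} → ℝ) × ({k' // k ≤ k'} → ℕ × ℕ) =>
      ((q.2 ⟨k, le_rfl⟩).1 : ℝ) / (1 + (q.2 ⟨k, le_rfl⟩).2)) ⁻¹' s, ?_, rfl⟩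
  exact ((measurable_of_countable fun v : ℕ × ℕ => (v.1 : ℝ) / (1 + v.2)).comp
    ((measurable_pi_apply _).comp measurable_snd)) hs

lemma integrable_mart (hp : ∀ j, Measurable (p j)) (μ : Measure Ω) [IsFiniteMeasure μ] (k : ℕ) :
    Integrable (Mart H p k) μ := by
  refine .of_bound ((stronglyMeasurable_mart H k).mono (filt_le H hp k)).aestronglyMeasurable #H
    (ae_of_all _ fun ω => ?_)
  rw [Real.norm_of_nonneg (by unfold Mart; positivity)]
  calc Mart H p k ω ≤ Vplus H p k ω := div_le_self (by positivity) (by simp)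
    _ ≤ #H := by exact_mod_cast card_filter_le _ _

lemma measurable_exchangeTerm (hp : ∀ j, Measurable (p j)) (k : ℕ) (j₀ j : Fin m) :
    Measurable (exchangeTerm H p k j₀ j) := by
  refine ((measurable_of_countable fun b : ℕ => ((b * (b + 1) : ℕ) : ℝ)⁻¹).comp
    (measurable_vminus H hp k)).mul (.sub (.ite ?_ measurable_const measurable_const)
      (.ite ?_ measurable_const measurable_const))
  · exact (measurableSet_le (hp j₀) measurable_const).inter
      (measurableSet_lt measurable_const (hp j))
  · exact (measurableSet_le (hp j) measurable_const).inter
      (measurableSet_lt measurable_const (hp j₀))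

lemma integrable_exchangeTerm (hp : ∀ j, Measurable (p j)) (μ : Measure Ω) [IsFiniteMeasure μ]
    (k : ℕ) (j₀ j : Fin m) : Integrable (exchangeTerm H p k j₀ j) μ := by
  refine .of_bound (measurable_exchangeTerm H hp k j₀ j).aestronglyMeasurable 1
    (ae_of_all _ fun ω => ?_)
  rw [exchangeTerm, norm_mul, Real.norm_of_nonneg (by positivity)]
  refine mul_le_one₀ (Nat.cast_inv_le_one _) (norm_nonneg _) ?_
  split_ifs <;> norm_num

end Measurability

lemma setIntegral_eq_zero_of_comp_eq_neg {α : Type*} [MeasurableSpace α] {ν : Measure α}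
    {T : α → α} (hT : Measurable T) (hν : ν.map T = ν) {u : Set α} (hu : MeasurableSet u)
    (huT : T ⁻¹' u = u) {f : α → ℝ} (hf : Measurable f) (hfT : ∀ x, f (T x) = -f x) :
    ∫ x in u, f x ∂ν = 0 := by
  have hres : (ν.restrict u).map T = ν.restrict u := by
    calc (ν.restrict u).map T = (ν.restrict (T ⁻¹' u)).map T := by rw [huT]
      _ = ν.restrict u := by rw [← Measure.restrict_map hT hu, hν]
  have h : ∫ x in u, f x ∂ν = ∫ x in u, f (T x) ∂ν := by
    conv_lhs => rw [← hres]
    exact integral_map hT.aemeasurable hf.aestronglyMeasurable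
  simp only [hfT, integral_neg] at h
  linarith

section Laws

variable [MeasurableSpace Ω] {μ : Measure Ω}

lemma map_eq_map_of_ae_eq_or_eq {β : Type*} [MeasurableSpace β] [MeasurableSingletonClass β]
    [IsProbabilityMeasure μ] {X Y : Ω → β} {a b : β} (hX : Measurable X) (hY : Measurable Y)
    (hab : a ≠ b) (hXab : ∀ᵐ ω ∂μ, X ω = a ∨ X ω = b) (hYab : ∀ᵐ ω ∂μ, Y ω = a ∨ Y ω = b)
    (hXY : μ {ω | X ω = a} = μ {ω | Y ω = a}) : μ.map X = μ.map Y := by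
  have hlaw : ∀ Z : Ω → β, Measurable Z → (∀ᵐ ω ∂μ, Z ω = a ∨ Z ω = b) → ∀ A, MeasurableSet A →
      μ.map Z A
        = (if a ∈ A then μ {ω | Z ω = a} else 0) + (if b ∈ A then μ {ω | Z ω = a}ᶜ else 0) := by
    intro Z hZ hZab A hA
    have hS : MeasurableSet {ω | Z ω = a} := hZ (measurableSet_singleton a)
    rw [Measure.map_apply hZ hA]
    have hae : Z ⁻¹' A =ᵐ[μ] {ω | (a ∈ A ∧ Z ω = a) ∨ (b ∈ A ∧ Z ω ≠ a)} := by
      filter_upwards [hZab] with ω hω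
      apply propext
      change Z ω ∈ A ↔ (a ∈ A ∧ Z ω = a) ∨ (b ∈ A ∧ Z ω ≠ a)
      rcases hω with h | h <;> simp [h, hab.symm]
    rw [measure_congr hae]
    by_cases ha : a ∈ A <;> by_cases hb : b ∈ A <;>
      simp [ha, hb, ← measure_add_measure_compl hS, Set.compl_ofPred, or_not]
  ext A hA
  rw [hlaw X hX hXab A hA, hlaw Y hY hYab A hA,
    prob_compl_eq_one_sub (s := {ω | X ω = a}) (hX (measurableSet_singleton a)),
    prob_compl_eq_one_sub (s := {ω | Y ω = a}) (hY (measurableSet_singleton a)), hXY]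

lemma ProbabilityTheory.iIndepFun.map_comp_perm {ι β : Type*} [Fintype ι] [MeasurableSpace β]
    {p : ι → Ω → β} (hp : ∀ i, AEMeasurable (p i) μ) (h : iIndepFun p μ) (σ : Equiv.Perm ι)
    (hσ : ∀ i, μ.map (p (σ i)) = μ.map (p i)) :
    μ.map (fun ω i => p (σ i) ω) = μ.map (fun ω i => p i ω) := by
  rw [(h.precomp σ.injective).map_fun_eq_pi_map fun i => hp (σ i), h.map_fun_eq_pi_map hp]
  simp only [hσ]

end Laws

local notation "coord" => fun (j : Fin _) (x : Fin _ → ℝ) => x j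

section CanonicalSpace

variable {m : ℕ} (H : Finset (Fin m))

lemma preimage_swap_eq_of_measurableSet_filt {k : ℕ} {u : Set (Fin m → ℝ)}
    (hu : MeasurableSet[Filt H coord k] u) {j j₀ : Fin m}
    (hj : j ∈ H.filter (·.val < k)) (hj₀ : j₀ ∈ H.filter (·.val < k)) :
    (fun x i => x (Equiv.swap j j₀ i)) ⁻¹' u = u := by
  obtain ⟨t, -, rfl⟩ := hu
  have hmono : ∀ {i k'}, k ≤ k' → i ∈ H.filter (·.val < k) → i ∈ H.filter (·.val < k') :=
    fun hk hi => mem_filter.2 ⟨(mem_filter.1 hi).1, (mem_filter.1 hi).2.trans_le hk⟩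
  ext x
  simp only [Set.mem_preimage]
  congr! 2
  · funext i
    refine congrArg x (Equiv.swap_apply_of_ne_of_ne ?_ ?_) <;> rintro rfl
    exacts [i.2 (mem_filter.1 hj).1, i.2 (mem_filter.1 hj₀).1]
  · funext k'
    have hσ := Equiv.swap_apply_mem_iff (hmono k'.2 hj) (hmono k'.2 hj₀)
    exact Prod.ext (card_filter_comp_perm H (P := fun i => x i ≤ 1/2) hσ)
      (card_filter_comp_perm H (P := fun i => 1/2 < x i) hσ)

lemma setIntegral_exchangeTerm_coord_eq_zero {ν : Measure (Fin m → ℝ)} {k : ℕ} {j₀ j : Fin m}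
    (hj₀ : j₀ ∈ H.filter (·.val < k)) (hj : j ∈ H.filter (·.val < k))
    (hν : ν.map (fun x i => x (Equiv.swap j j₀ i)) = ν) {u : Set (Fin m → ℝ)}
    (hu : MeasurableSet[Filt H coord k] u) :
    ∫ x in u, exchangeTerm H coord k j₀ j x ∂ν = 0 := by
  have hcoord : ∀ j, Measurable fun x : Fin m → ℝ => x j := measurable_pi_apply
  have hanti : ∀ x : Fin m → ℝ, exchangeTerm H coord k j₀ j
      (fun i => x (Equiv.swap j j₀ i)) = -exchangeTerm H coord k j₀ j x :=
    exchangeTerm_comp_swap H coord hj₀ hj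
  have hT : Measurable fun (x : Fin m → ℝ) i => x (Equiv.swap j j₀ i) :=
    measurable_pi_lambda _ fun i => measurable_pi_apply _
  exact setIntegral_eq_zero_of_comp_eq_neg hT hν (filt_le H hcoord k _ hu)
    (preimage_swap_eq_of_measurableSet_filt H hu hj hj₀) (measurable_exchangeTerm H hcoord k j₀ j)
    hanti

theorem setIntegral_mart_coord_le_succ (ν : Measure (Fin m → ℝ)) [IsFiniteMeasure ν]
    (hν : ∀ j ∈ H, ∀ j' ∈ H, ν.map (fun x i => x (Equiv.swap j j' i)) = ν) (n : ℕ)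
    {u : Set (Fin m → ℝ)} (hu : MeasurableSet[Filt H coord (n + 1)] u) :
    ∫ x in u, Mart H coord n x ∂ν ≤ ∫ x in u, Mart H coord (n + 1) x ∂ν := by
  by_cases hn : ∀ j ∈ H, j.val ≠ n
  · rw [mart_succ_of_forall_ne H _ hn]
  push Not at hn
  obtain ⟨j₀, hj₀, rfl⟩ := hn
  have hcoord : ∀ j, Measurable fun x : Fin m → ℝ => x j := measurable_pi_apply
  have hj₀' : j₀ ∈ H.filter (·.val < j₀.val + 1) := mem_filter.2 ⟨hj₀, Nat.lt_succ_self _⟩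
  have hzero : ∀ j ∈ H.filter (·.val < j₀.val + 1),
      ∫ x in u, exchangeTerm H coord (j₀.val + 1) j₀ j x ∂ν = 0 := fun j hj =>
    setIntegral_exchangeTerm_coord_eq_zero H hj₀' hj (hν j (mem_filter.1 hj).1 j₀ hj₀) hu
  have hint : ∀ j, Integrable (exchangeTerm H coord (j₀.val + 1) j₀ j) ν :=
    integrable_exchangeTerm H hcoord ν _ _
  calc ∫ x in u, Mart H coord j₀.val x ∂ν
      = ∫ x in u, (Mart H coord j₀.val x + ∑ j ∈ H.filter (·.val < j₀.val + 1),
          exchangeTerm H coord (j₀.val + 1) j₀ j x) ∂ν := by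
        rw [integral_add (integrable_mart H hcoord _ _).integrableOn
            (integrable_finsetSum _ fun j _ => (hint j).integrableOn),
          integral_finsetSum _ fun j _ => (hint j).integrableOn, sum_eq_zero hzero, add_zero]
    _ ≤ ∫ x in u, Mart H coord (j₀.val + 1) x ∂ν := by
        refine setIntegral_mono ((integrable_mart H hcoord _ _).add
          (integrable_finsetSum _ fun j _ => hint j)).integrableOn
          (integrable_mart H hcoord _ _).integrableOn fun x => ?_
        linarith [sum_exchangeTerm_le H coord hj₀ x]

end CanonicalSpace

section Supermartingale

variable [MeasurableSpace Ω] {μ : Measure Ω} [IsProbabilityMeasure μ] {m : ℕ} (H : Finset (Fin m))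
  {p : Fin m → Ω → ℝ}

lemma filt_eq_comap_coord (k : ℕ) :
    Filt H p k = (Filt H coord k).comap fun ω j => p j ω := by
  rw [Filt, Filt, MeasurableSpace.comap_comp]
  rfl

theorem setIntegral_mart_le_succ (hp : ∀ j, Measurable (p j)) (hindep : iIndepFun p μ)
    (hlaw : ∀ j ∈ H, ∀ j' ∈ H, μ.map (p j) = μ.map (p j')) (n : ℕ) {s : Set Ω}
    (hs : MeasurableSet[Filt H p (n + 1)] s) :
    ∫ ω in s, Mart H p n ω ∂μ ≤ ∫ ω in s, Mart H p (n + 1) ω ∂μ := by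
  have hX : Measurable fun ω j => p j ω := measurable_pi_lambda _ hp
  have hν : ∀ j ∈ H, ∀ j' ∈ H, (μ.map fun ω j => p j ω).map (fun x i => x (Equiv.swap j j' i))
      = μ.map fun ω j => p j ω := by
    intro j hj j' hj'
    rw [Measure.map_map (measurable_pi_lambda _ fun i => measurable_pi_apply _) hX]
    refine hindep.map_comp_perm (fun i => (hp i).aemeasurable) _ fun i => ?_
    rw [Equiv.swap_apply_def]
    split_ifs with h₁ h₂
    · rw [h₁, hlaw j hj j' hj']
    · rw [h₂, hlaw j hj j' hj']
    · rfl
  rw [filt_eq_comap_coord] at hs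
  obtain ⟨u, hu, rfl⟩ := hs
  have hcoord : ∀ j, Measurable fun x : Fin m → ℝ => x j := measurable_pi_apply
  have h := setIntegral_mart_coord_le_succ H _ hν n hu
  rwa [setIntegral_map (filt_le H hcoord _ _ hu) ((stronglyMeasurable_mart H n).mono
      (filt_le H hcoord n)).aestronglyMeasurable hX.aemeasurable,
    setIntegral_map (filt_le H hcoord _ _ hu) ((stronglyMeasurable_mart H (n + 1)).mono
      (filt_le H hcoord (n + 1))).aestronglyMeasurable hX.aemeasurable] at h

noncomputable def backwardFilt (hp : ∀ j, Measurable (p j)) (N : ℕ) :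
    Filtration ℕ ‹MeasurableSpace Ω› where
  seq i := Filt H p (N - i)
  mono' _ _ hij := filt_antitone H (Nat.sub_le_sub_left hij N)
  le' _ := filt_le H hp _

theorem supermartingale_mart_backward (hp : ∀ j, Measurable (p j)) (hindep : iIndepFun p μ)
    (hlaw : ∀ j ∈ H, ∀ j' ∈ H, μ.map (p j) = μ.map (p j')) (N : ℕ) :
    Supermartingale (fun i => Mart H p (N - i)) (backwardFilt H hp N) μ := by
  refine supermartingale_of_setIntegral_succ_le (fun i => stronglyMeasurable_mart H (N - i))
    (fun i => integrable_mart H hp μ _) fun i s hs => ?_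
  rcases (by omega : N - i = N - (i + 1) + 1 ∨ N - (i + 1) = N - i) with h | h
  · change MeasurableSet[Filt H p (N - i)] s at hs
    rw [h] at hs ⊢
    exact setIntegral_mart_le_succ H hp hindep hlaw _ hs
  · rw [h]

theorem integral_mart_stopped_le (hp : ∀ j, Measurable (p j)) (hindep : iIndepFun p μ)
    (hlaw : ∀ j ∈ H, ∀ j' ∈ H, μ.map (p j) = μ.map (p j')) {N : ℕ} {τ : Ω → ℕ}
    (hτN : ∀ ω, τ ω ≤ N) (hτ : ∀ k, MeasurableSet[Filt H p k] {ω | k ≤ τ ω}) :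
    ∫ ω, Mart H p (τ ω) ω ∂μ ≤ ∫ ω, Mart H p N ω ∂μ := by
  have hτ' : IsStoppingTime (backwardFilt H hp N) fun ω => ((N - τ ω : ℕ) : WithTop ℕ) := by
    intro i
    have hset : {ω | ((N - τ ω : ℕ) : WithTop ℕ) ≤ i} = {ω | N - i ≤ τ ω} := by
      ext ω
      change ((N - τ ω : ℕ) : WithTop ℕ) ≤ i ↔ N - i ≤ τ ω
      rw [Nat.cast_le]
      omega
    change MeasurableSet[Filt H p (N - i)] {ω | ((N - τ ω : ℕ) : WithTop ℕ) ≤ i}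
    exact hset ▸ hτ (N - i)
  have h := (supermartingale_mart_backward H hp hindep hlaw N).neg.expected_stoppedValue_mono
    (isStoppingTime_const _ 0) hτ' (fun ω => bot_le) (N := N)
    (fun ω => WithTop.coe_le_coe.2 (Nat.sub_le N (τ ω)))
  change ∫ ω, -Mart H p (N - 0) ω ∂μ ≤ ∫ ω, -Mart H p (N - (N - τ ω)) ω ∂μ at h
  simpa only [integral_neg, neg_le_neg_iff, Nat.sub_zero, fun ω => Nat.sub_sub_self (hτN ω)]
    using h

end Supermartingale

theorem backward_supermartingale_knockoff_general
    [MeasurableSpace Ω] (μ : Measure Ω) [IsProbabilityMeasure μ]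
    (m : ℕ) (H : Finset (Fin m)) (p : Fin m → Ω → ℝ)
    (hmeas : ∀ j, Measurable (p j))
    (hvals : ∀ j ∈ H, ∀ᵐ ω ∂μ, p j ω = 1/2 ∨ p j ω = 1)
    (hiid : ∀ j ∈ H, ∀ j' ∈ H,
      μ {ω | p j ω = 1/2} = μ {ω | p j' ω = 1/2})
    (hindep : ProbabilityTheory.iIndepFun p μ) :
    (∀ k, 1 ≤ k → k ≤ m →
      μ[Mart H p (k - 1)|Filt H p k] ≤ᵐ[μ] Mart H p k)
    ∧ ∀ τ : Ω → ℕ, (∀ ω, τ ω ≤ m) →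
        (∀ k, MeasurableSet[Filt H p k] {ω | k ≤ τ ω}) →
        ∫ ω, Mart H p (τ ω) ω ∂μ ≤ ∫ ω, Mart H p m ω ∂μ := by
  have hlaw : ∀ j ∈ H, ∀ j' ∈ H, μ.map (p j) = μ.map (p j') := fun j hj j' hj' =>
    map_eq_map_of_ae_eq_or_eq (hmeas j) (hmeas j') (by norm_num) (hvals j hj) (hvals j' hj')
      (hiid j hj j' hj')
  refine ⟨fun k _ hkm => ?_, fun τ hτm hτ => integral_mart_stopped_le H hmeas hindep hlaw hτm hτ⟩
  have h : μ[Mart H p (m - (m - k + 1)) | Filt H p (m - (m - k))] ≤ᵐ[μ] Mart H p (m - (m - k)) :=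
    (supermartingale_mart_backward H hmeas hindep hlaw m).condExp_ae_le (Nat.le_succ _)
  rwa [show m - (m - k + 1) = k - 1 by omega, Nat.sub_sub_self hkm] at h

/-- Backward supermartingale property of `M(k) = V⁺(k)/(1 + V⁻(k))` for independent
p-values whose null members are i.i.d. with values in `{1/2, 1}` and
`P(pⱼ = 1/2) ≤ 1/2`; consequently `E[M(k̂)] ≤ E[M(m)]` for every stopping time `k̂`
of the backward filtration. -/
theorem backward_supermartingale_knockoff
    [MeasurableSpace Ω] (μ : Measure Ω) [IsProbabilityMeasure μ]
    (m : ℕ) (H : Finset (Fin m)) (p : Fin m → Ω → ℝ)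
    (hmeas : ∀ j, Measurable (p j))
    (hvals : ∀ j ∈ H, ∀ᵐ ω ∂μ, p j ω = 1/2 ∨ p j ω = 1)
    (hiid : ∀ j ∈ H, ∀ j' ∈ H,
      μ {ω | p j ω = 1/2} = μ {ω | p j' ω = 1/2})
    (hhalf : ∀ j ∈ H, μ {ω | p j ω = 1/2} ≤ 1/2)
    (hindep : ProbabilityTheory.iIndepFun p μ) :
    (∀ k, 1 ≤ k → k ≤ m →
      μ[Mart H p (k - 1)|Filt H p k] ≤ᵐ[μ] Mart H p k)
    ∧ ∀ τ : Ω → ℕ, (∀ ω, τ ω ≤ m) →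
        (∀ k, MeasurableSet[Filt H p k] {ω | k ≤ τ ω}) →
        ∫ ω, Mart H p (τ ω) ω ∂μ ≤ ∫ ω, Mart H p m ω ∂μ :=
  backward_supermartingale_knockoff_general μ m H p hmeas hvals hiid hindep
end

section
/- Let V⁺, V⁻ be nonnegative integers with V⁺ + V⁻ = n > 0. Then (V⁺/n)·(V⁺ - 1)/(V⁻ + 1) + (V⁻/n)·V⁺/(V⁻ ∨ 1) ≤ V⁺/(1 + V⁻), with the convention that the first term is 0 when V⁺ = 0. More precisely, the left side equals V⁺/(1+V⁻) when V⁻ > 0 and equals V⁺ - 1 ≤ V⁺/(1+V⁻) when V⁻ = 0 (using V⁺ ≥ 1 in that case, since n > 0). -/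
/-- One-step inequality in the backward supermartingale argument:
for nonnegative integers `V⁺, V⁻` with `V⁺ + V⁻ = n > 0`,
`(V⁺/n)·(V⁺-1)/(V⁻+1) + (V⁻/n)·V⁺/(V⁻ ∨ 1) ≤ V⁺/(1+V⁻)`, with the first term
taken to be `0` when `V⁺ = 0`; the left side equals `V⁺/(1+V⁻)` when `V⁻ > 0`
and equals `V⁺ - 1` when `V⁻ = 0`. -/
theorem supermartingale_one_step (Vp Vm : ℕ) (hn : 0 < Vp + Vm) :
    (0 < Vm →
      (if Vp = 0 then (0 : ℝ)
        else ((Vp : ℝ) / ((Vp : ℝ) + (Vm : ℝ))) * (((Vp : ℝ) - 1) / ((Vm : ℝ) + 1)))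
        + ((Vm : ℝ) / ((Vp : ℝ) + (Vm : ℝ))) * ((Vp : ℝ) / max (Vm : ℝ) 1)
      = (Vp : ℝ) / (1 + (Vm : ℝ)))
    ∧ (Vm = 0 →
      (if Vp = 0 then (0 : ℝ)
        else ((Vp : ℝ) / ((Vp : ℝ) + (Vm : ℝ))) * (((Vp : ℝ) - 1) / ((Vm : ℝ) + 1)))
        + ((Vm : ℝ) / ((Vp : ℝ) + (Vm : ℝ))) * ((Vp : ℝ) / max (Vm : ℝ) 1)
      = (Vp : ℝ) - 1)
    ∧ (if Vp = 0 then (0 : ℝ)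
        else ((Vp : ℝ) / ((Vp : ℝ) + (Vm : ℝ))) * (((Vp : ℝ) - 1) / ((Vm : ℝ) + 1)))
        + ((Vm : ℝ) / ((Vp : ℝ) + (Vm : ℝ))) * ((Vp : ℝ) / max (Vm : ℝ) 1)
      ≤ (Vp : ℝ) / (1 + (Vm : ℝ)) := by
  rcases Nat.eq_zero_or_pos Vm with hm | hm
  · subst hm
    have hp : Vp ≠ 0 := by omega
    have hpR : (1:ℝ) ≤ (Vp:ℝ) := by exact_mod_cast Nat.one_le_iff_ne_zero.mpr hp
    have hp0 : (Vp:ℝ) ≠ 0 := by positivity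
    simp only [if_neg hp, Nat.cast_zero, add_zero, zero_add, zero_div, zero_mul,
      max_eq_right (by norm_num : (0:ℝ) ≤ 1), div_one, div_self hp0, one_mul]
    refine ⟨fun h => absurd h (lt_irrefl 0), fun _ => trivial, by linarith⟩
  · have hmR : (1:ℝ) ≤ (Vm:ℝ) := by exact_mod_cast hm
    have hmax : max (Vm:ℝ) 1 = (Vm:ℝ) := max_eq_left hmR
    have hm0 : (Vm:ℝ) ≠ 0 := by linarith
    have heq : (if Vp = 0 then (0 : ℝ)
        else ((Vp : ℝ) / ((Vp : ℝ) + (Vm : ℝ))) * (((Vp : ℝ) - 1) / ((Vm : ℝ) + 1)))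
        + ((Vm : ℝ) / ((Vp : ℝ) + (Vm : ℝ))) * ((Vp : ℝ) / max (Vm : ℝ) 1)
      = (Vp : ℝ) / (1 + (Vm : ℝ)) := by
      rcases Nat.eq_zero_or_pos Vp with hp | hp
      · subst hp
        simp [hmax, hm0]
      · have hp0 : (Vp:ℝ) ≠ 0 := by positivity
        have hs : (Vp:ℝ) + (Vm:ℝ) ≠ 0 := by positivity
        have h1 : (Vm:ℝ) + 1 ≠ 0 := by positivity
        have h2 : (1:ℝ) + (Vm:ℝ) ≠ 0 := by positivity
        rw [if_neg (Nat.pos_iff_ne_zero.mp hp), hmax]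
        field_simp
        ring
    exact ⟨fun _ => heq, fun h => absurd h (by omega), le_of_eq heq⟩
end

section
/- Let Σ be a symmetric positive definite p×p real matrix and B a symmetric positive semidefinite p×p matrix with B ⪯ 2Σ (i.e., 2Σ − B is positive semidefinite). Then the matrix 2B − BΣ⁻¹B is positive semidefinite. -/
/-!
`2B − BΣ⁻¹B` is the Schur complement of `Σ` in the block matrix `[[Σ, B], [B, 2B]]`, so it is
positive semidefinite as soon as that block matrix is. The block matrix splits as
`½ [[2Σ − B, 0], [0, 0]] + ½ [[B, 2B], [2B, 4B]]`, the congruences of `2Σ − B` and of `B` by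
`[I, 0]` and by `[I, 2I]`.
-/

open Matrix
open scoped ComplexOrder

theorem Matrix.posSemidef_fromBlocks_of_posSemidef_two_smul_sub {n 𝕜 : Type*} [Fintype n]
    [DecidableEq n] [RCLike 𝕜] {S B : Matrix n n 𝕜} (hB : B.PosSemidef)
    (h : (2 • S - B).PosSemidef) : (fromBlocks S B B (2 • B)).PosSemidef := by
  set E₁ : Matrix n (n ⊕ n) 𝕜 := fromCols 1 0
  set E₂ : Matrix n (n ⊕ n) 𝕜 := fromCols 1 ((2 : 𝕜) • 1)
  have hsplit : fromBlocks S B B (2 • B) =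
      E₁ᴴ * ((2⁻¹ : 𝕜) • (2 • S - B) * E₁) + E₂ᴴ * ((2⁻¹ : 𝕜) • B * E₂) := by
    simp only [E₁, E₂, conjTranspose_fromCols_eq_fromRows_conjTranspose, mul_fromCols,
      fromRows_mul, fromCols_fromRows_eq_fromBlocks, fromBlocks_add]
    congr 1 <;>
      simp only [conjTranspose_one, conjTranspose_zero, conjTranspose_smul, star_ofNat, one_mul,
        mul_one, zero_mul, mul_zero, zero_add, Matrix.smul_mul, Matrix.mul_smul] <;>
      module
  have hhalf : (0 : 𝕜) ≤ 2⁻¹ := by positivity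
  rw [hsplit, ← Matrix.mul_assoc, ← Matrix.mul_assoc]
  exact ((h.smul hhalf).conjTranspose_mul_mul_same E₁).add
    ((hB.smul hhalf).conjTranspose_mul_mul_same E₂)

/-- If `Σ ≻ 0`, `B ⪰ 0` and `B ⪯ 2Σ`, then `2B − BΣ⁻¹B ⪰ 0`. -/
theorem two_B_sub_B_inv_B_posSemidef (p : ℕ) (Sig B : Matrix (Fin p) (Fin p) ℝ)
    (hSig : Sig.PosDef) (hB : B.PosSemidef) (h2 : (2 • Sig - B).PosSemidef) :
    (2 • B - B * Sig⁻¹ * B).PosSemidef := by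
  have := hSig.isUnit.invertible
  have hBH : Bᴴ = B := hB.isHermitian.eq
  have hblock : (fromBlocks Sig B Bᴴ (2 • B)).PosSemidef := by
    rw [hBH]
    exact posSemidef_fromBlocks_of_posSemidef_two_smul_sub hB h2
  simpa only [hBH] using (hSig.fromBlocks₁₁ B (2 • B)).mp hblock
end

section
/- Let Σ be a symmetric positive definite p×p matrix, B symmetric with 0 ⪯ B ⪯ 2Σ. Then the 2p×2p block matrix G = [[Σ, Σ−B],[Σ−B, Σ]] is positive semidefinite. -/
/-!
Writing `A := 2Σ - B ⪰ 0`, the Gram matrix splits as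
`G = ½ [[A, A], [A, A]] + ½ [[B, -B], [-B, B]]`,
and each summand is a congruence `Mᴴ C M` of a positive semidefinite `C`,
with `M = [I I]` and `M = [I -I]` respectively.
-/

open Matrix

namespace Matrix.PosSemidef

variable {n m₁ m₂ R : Type*} [Fintype n] [Fintype m₁] [Fintype m₂] [Ring R] [PartialOrder R]
  [StarRing R] {A : Matrix n n R}

theorem fromBlocks_conjTranspose_mul_mul_same (hA : A.PosSemidef) (U : Matrix n m₁ R)
    (V : Matrix n m₂ R) :
    (fromBlocks (Uᴴ * A * U) (Uᴴ * A * V) (Vᴴ * A * U) (Vᴴ * A * V)).PosSemidef := by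
  have h := hA.conjTranspose_mul_mul_same (fromCols U V)
  rwa [conjTranspose_fromCols_eq_fromRows_conjTranspose, fromRows_mul,
    fromRows_mul_fromCols] at h

theorem fromBlocks_self [DecidableEq n] (hA : A.PosSemidef) :
    (fromBlocks A A A A).PosSemidef := by
  simpa using hA.fromBlocks_conjTranspose_mul_mul_same (1 : Matrix n n R) (1 : Matrix n n R)

theorem fromBlocks_neg_self [DecidableEq n] (hA : A.PosSemidef) :
    (fromBlocks A (-A) (-A) A).PosSemidef := by
  simpa using hA.fromBlocks_conjTranspose_mul_mul_same (1 : Matrix n n R) (-1 : Matrix n n R)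

end Matrix.PosSemidef

theorem knockoff_gram_posSemidef_general (p : ℕ) (Sig B : Matrix (Fin p) (Fin p) ℝ)
    (hB : B.PosSemidef) (h2 : (2 • Sig - B).PosSemidef) :
    (Matrix.fromBlocks Sig (Sig - B) (Sig - B) Sig).PosSemidef := by
  have hsplit : fromBlocks Sig (Sig - B) (Sig - B) Sig =
      (2⁻¹ : ℝ) • (fromBlocks (2 • Sig - B) (2 • Sig - B) (2 • Sig - B) (2 • Sig - B) +
        fromBlocks B (-B) (-B) B) := by
    rw [fromBlocks_add, fromBlocks_smul]
    congr 1 <;> module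
  rw [hsplit]
  exact (h2.fromBlocks_self.add hB.fromBlocks_neg_self).smul (by norm_num)

/-- If `Σ ≻ 0`, `0 ⪯ B ⪯ 2Σ`, then the block matrix `[[Σ, Σ−B],[Σ−B, Σ]]`
is positive semidefinite. -/
theorem knockoff_gram_posSemidef (p : ℕ) (Sig B : Matrix (Fin p) (Fin p) ℝ)
    (hSig : Sig.PosDef) (hB : B.PosSemidef) (h2 : (2 • Sig - B).PosSemidef) :
    (Matrix.fromBlocks Sig (Sig - B) (Sig - B) Sig).PosSemidef :=
  knockoff_gram_posSemidef_general p Sig B hB h2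
end

section
/- Let X = (X_{G₁}, ..., X_{G_M}) be a random vector partitioned into M groups, and construct X̃ sequentially: for m = 1, ..., M, sample X̃_{G_m} from the conditional law L(X_{G_m} | X_{−G_m}, X̃_{G₁}, ..., X̃_{G_{m−1}}). Then for any S ⊆ [M], (X, X̃)_{GSwap(S)} has the same distribution as (X, X̃), where GSwap(S) exchanges X_{G_m} and X̃_{G_m} for each m ∈ S. -/
/-!
Write `J_{≤k}(x, x̃)` for the mass of `(X, X̃_{≤k})` and `C_k` for that of `(X_{-k}, X̃_{<k})`.
The sequential construction says `J_{≤k} = J_{<k} · (J_{<k} ∘ swap_k) / C_k` (both sides vanish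
when `C_k = 0`, since `J_{≤k} ≤ C_k`). By induction on `k`, `J_{≤k}` is invariant under `swap_m`
for every `m ≤ k`: for `m = k` the numerator is symmetric and `C_k` does not see coordinate `k`;
for `m < k`, `swap_m` commutes with `swap_k`, and `C_k`, a sum of `J_{<k}` over the value of `X_k`,
inherits the invariance of `J_{<k}`. At the last index `J_{≤k}` is the joint mass itself, and a group
swap is a composition of single swaps.
-/

open Finset Function
open scoped Classical

theorem eq_div_of_mul_eq_of_le {K : Type*} [Field K] [LinearOrder K] [IsStrictOrderedRing K]
    {a c g : K} (ha : 0 ≤ a) (hac : a ≤ c) (h : a * c = g) : a = g / c := by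
  rcases eq_or_ne c 0 with rfl | hc
  · rw [div_zero]
    exact le_antisymm hac ha
  · exact eq_div_of_mul_eq hc h

section Marginal

variable {ι : Type*} [Fintype ι] [DecidableEq ι] {α : ι → Type*} [∀ i, Fintype (α i)]

/-- The mass of `(X_A, X̃_B)` at `(z.1_A, z.2_B)` under the joint mass function `Q` of `(X, X̃)`. -/
noncomputable def marginal (Q : (∀ i, α i) → (∀ i, α i) → ℝ) (A B : Set ι)
    (z : (∀ i, α i) × (∀ i, α i)) : ℝ :=
  ∑ u, ∑ y, if (∀ i ∈ A, u i = z.1 i) ∧ (∀ i ∈ B, y i = z.2 i) then Q u y else 0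

variable {Q : (∀ i, α i) → (∀ i, α i) → ℝ}

theorem marginal_nonneg (hQ : ∀ x y, 0 ≤ Q x y) (A B : Set ι) (z : (∀ i, α i) × (∀ i, α i)) :
    0 ≤ marginal Q A B z :=
  sum_nonneg fun u _ => sum_nonneg fun y _ => ite_nonneg (hQ u y) le_rfl

theorem marginal_anti (hQ : ∀ x y, 0 ≤ Q x y) {A A' B B' : Set ι} (hA : A ⊆ A') (hB : B ⊆ B')
    (z : (∀ i, α i) × (∀ i, α i)) : marginal Q A' B' z ≤ marginal Q A B z := by
  refine sum_le_sum fun u _ => sum_le_sum fun y _ => ?_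
  split_ifs with hAB' hAB
  · exact le_rfl
  · exact absurd ⟨fun i hi => hAB'.1 i (hA hi), fun i hi => hAB'.2 i (hB hi)⟩ hAB
  · exact hQ u y
  · exact le_rfl

theorem marginal_congr {A B : Set ι} {z z' : (∀ i, α i) × (∀ i, α i)}
    (h₁ : ∀ i ∈ A, z.1 i = z'.1 i) (h₂ : ∀ i ∈ B, z.2 i = z'.2 i) :
    marginal Q A B z = marginal Q A B z' := by
  refine sum_congr rfl fun u _ => sum_congr rfl fun y _ => if_congr ?_ rfl rfl
  exact and_congr (forall₂_congr fun i hi => by rw [h₁ i hi])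
    (forall₂_congr fun i hi => by rw [h₂ i hi])

theorem marginal_univ_univ (z : (∀ i, α i) × (∀ i, α i)) :
    marginal Q Set.univ Set.univ z = Q z.1 z.2 := by
  simp [marginal, ← funext_iff, ite_and]

theorem marginal_eq_sum_update {k : ι} {A : Set ι} (hk : k ∉ A) (B : Set ι)
    (z : (∀ i, α i) × (∀ i, α i)) :
    marginal Q A B z = ∑ c, marginal Q (insert k A) B (update z.1 k c, z.2) := by
  have hcond : ∀ (u : ∀ i, α i) c, (∀ i ∈ insert k A, u i = update z.1 k c i) ↔
      u k = c ∧ ∀ i ∈ A, u i = z.1 i := by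
    intro u c
    simp only [Set.forall_mem_insert, update_self]
    exact and_congr_right' <| forall₂_congr fun i hi => by
      rw [update_of_ne (ne_of_mem_of_not_mem hi hk)]
  simp only [marginal, hcond, and_assoc]
  symm
  rw [Finset.sum_comm]
  refine sum_congr rfl fun u _ => ?_
  rw [Finset.sum_comm]
  refine sum_congr rfl fun y _ => ?_
  simp [ite_and]

end Marginal

section GroupSwap

variable {ι : Type*} [DecidableEq ι] {α : ι → Type*}

/-- `(X, X̃)_{GSwap(S)}` in the paper's notation. -/
def groupSwap (S : Finset ι) (z : (∀ i, α i) × (∀ i, α i)) : (∀ i, α i) × (∀ i, α i) :=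
  (fun i => if i ∈ S then z.2 i else z.1 i, fun i => if i ∈ S then z.1 i else z.2 i)

theorem groupSwap_fst_of_notMem {S : Finset ι} {i : ι} (hi : i ∉ S)
    (z : (∀ i, α i) × (∀ i, α i)) : (groupSwap S z).1 i = z.1 i :=
  if_neg hi

theorem groupSwap_snd_of_notMem {S : Finset ι} {i : ι} (hi : i ∉ S)
    (z : (∀ i, α i) × (∀ i, α i)) : (groupSwap S z).2 i = z.2 i :=
  if_neg hi

@[simp]
theorem groupSwap_empty (z : (∀ i, α i) × (∀ i, α i)) : groupSwap ∅ z = z := by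
  simp [groupSwap]

theorem groupSwap_groupSwap (S T : Finset ι) (z : (∀ i, α i) × (∀ i, α i)) :
    groupSwap S (groupSwap T z) = groupSwap (symmDiff S T) z := by
  ext i <;> by_cases hS : i ∈ S <;> by_cases hT : i ∈ T <;>
    simp [groupSwap, mem_symmDiff, hS, hT]

theorem groupSwap_comm (S T : Finset ι) (z : (∀ i, α i) × (∀ i, α i)) :
    groupSwap S (groupSwap T z) = groupSwap T (groupSwap S z) := by
  rw [groupSwap_groupSwap, groupSwap_groupSwap, symmDiff_comm]

@[simp]
theorem groupSwap_groupSwap_self (S : Finset ι) (z : (∀ i, α i) × (∀ i, α i)) :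
    groupSwap S (groupSwap S z) = z := by
  rw [groupSwap_groupSwap, symmDiff_self, bot_eq_empty, groupSwap_empty]

theorem groupSwap_insert {m : ι} {S : Finset ι} (hm : m ∉ S) (z : (∀ i, α i) × (∀ i, α i)) :
    groupSwap (insert m S) z = groupSwap {m} (groupSwap S z) := by
  rw [groupSwap_groupSwap, symmDiff_eq_union (disjoint_singleton_left.2 hm), insert_eq]

theorem groupSwap_update_fst {k : ι} {S : Finset ι} (hk : k ∉ S) (z : (∀ i, α i) × (∀ i, α i))
    (c : α k) :
    groupSwap S (update z.1 k c, z.2) = (update (groupSwap S z).1 k c, (groupSwap S z).2) := by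
  ext i
  · rcases eq_or_ne i k with rfl | hik
    · simp [groupSwap, hk]
    · simp [groupSwap, hik]
  · by_cases hi : i ∈ S
    · simp [groupSwap, hi, ne_of_mem_of_not_mem hi hk]
    · simp [groupSwap, hi]

end GroupSwap

section Exchangeability

variable {ι : Type*} [Fintype ι] [DecidableEq ι] {α : ι → Type*} [∀ i, Fintype (α i)]
  {Q : (∀ i, α i) → (∀ i, α i) → ℝ}

theorem marginal_groupSwap_singleton_of_notMem {k : ι} {A B : Set ι} (hA : k ∉ A) (hB : k ∉ B)
    (z : (∀ i, α i) × (∀ i, α i)) : marginal Q A B (groupSwap {k} z) = marginal Q A B z :=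
  marginal_congr
    (fun i hi => groupSwap_fst_of_notMem (by simpa using ne_of_mem_of_not_mem hi hA) z)
    (fun i hi => groupSwap_snd_of_notMem (by simpa using ne_of_mem_of_not_mem hi hB) z)

theorem marginal_insert_groupSwap (hQ : ∀ x y, 0 ≤ Q x y) {k : ι} {B : Set ι} (hk : k ∉ B)
    (hseq : ∀ z, marginal Q Set.univ (insert k B) z * marginal Q {k}ᶜ B z =
      marginal Q Set.univ B z * marginal Q Set.univ B (groupSwap {k} z))
    (hB : ∀ m ∈ B, ∀ z, marginal Q Set.univ B (groupSwap {m} z) = marginal Q Set.univ B z)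
    {m : ι} (hm : m ∈ insert k B) (z : (∀ i, α i) × (∀ i, α i)) :
    marginal Q Set.univ (insert k B) (groupSwap {m} z) = marginal Q Set.univ (insert k B) z := by
  have hdiv : ∀ z, marginal Q Set.univ (insert k B) z =
      marginal Q Set.univ B z * marginal Q Set.univ B (groupSwap {k} z) / marginal Q {k}ᶜ B z :=
    fun z => eq_div_of_mul_eq_of_le (marginal_nonneg hQ _ _ z)
      (marginal_anti hQ (Set.subset_univ _) (Set.subset_insert k B) z) (hseq z)
  rw [hdiv, hdiv]
  rcases Set.mem_insert_iff.1 hm with rfl | hmB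
  · rw [groupSwap_groupSwap_self, mul_comm,
      marginal_groupSwap_singleton_of_notMem (by simp : m ∉ ({m}ᶜ : Set ι)) hk]
  · have hkm : k ∉ ({m} : Finset ι) := by simpa using (ne_of_mem_of_not_mem hmB hk).symm
    have hC : marginal Q {k}ᶜ B (groupSwap {m} z) = marginal Q {k}ᶜ B z := by
      simp only [marginal_eq_sum_update (by simp : k ∉ ({k}ᶜ : Set ι)), Set.insert_eq,
        Set.union_compl_self, ← groupSwap_update_fst hkm, hB m hmB]
    rw [hB m hmB, groupSwap_comm, hB m hmB, hC]

end Exchangeability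

section Sequential

variable {ι : Type*} [Fintype ι] [LinearOrder ι] {α : ι → Type*} [∀ i, Fintype (α i)]
  {Q : (∀ i, α i) → (∀ i, α i) → ℝ}

/-- The sequential construction of `X̃`: `P(X̃_k = x̃_k | X, X̃_{<k}) = P(X_k = x̃_k | X_{-k}, X̃_{<k})`,
with the conditional probabilities cross-multiplied. -/
def IsSequentialKnockoff (Q : (∀ i, α i) → (∀ i, α i) → ℝ) : Prop :=
  ∀ k z, marginal Q Set.univ (Set.Iic k) z * marginal Q {k}ᶜ (Set.Iio k) z =
    marginal Q Set.univ (Set.Iio k) z * marginal Q Set.univ (Set.Iio k) (groupSwap {k} z)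

variable [PredOrder ι]

theorem marginal_Iic_groupSwap (hQ : ∀ x y, 0 ≤ Q x y) (hseq : IsSequentialKnockoff Q)
    (k : ι) : ∀ m ≤ k, ∀ z, marginal Q Set.univ (Set.Iic k) (groupSwap {m} z) =
      marginal Q Set.univ (Set.Iic k) z := by
  induction k using WellFoundedLT.induction with
  | _ k ih =>
    intro m hm z
    have hseq_k := hseq k
    rw [← Set.Iio_insert] at hseq_k ⊢
    refine marginal_insert_groupSwap hQ Set.self_notMem_Iio hseq_k (fun j hj => ?_)
      (by simpa [Set.Iio_insert] using hm) z
    have hk : ¬IsMin k := not_isMin_of_lt hj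
    rw [← Set.Iic_pred_eq_Iio_of_not_isMin hk]
    exact ih _ (Order.pred_lt_of_not_isMin hk) j (Order.le_pred_of_lt hj)

theorem uncurry_groupSwap_singleton_eq (hQ : ∀ x y, 0 ≤ Q x y) (hseq : IsSequentialKnockoff Q)
    (m : ι) (z : (∀ i, α i) × (∀ i, α i)) : uncurry Q (groupSwap {m} z) = uncurry Q z := by
  obtain ⟨k, -, hk⟩ := exists_max_image univ id ⟨m, mem_univ m⟩
  have hIic : Set.Iic k = Set.univ := Set.eq_univ_of_forall fun i => hk i (mem_univ i)
  have hswap := marginal_Iic_groupSwap hQ hseq k m (hk m (mem_univ m)) z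
  rwa [hIic, marginal_univ_univ, marginal_univ_univ] at hswap

theorem uncurry_groupSwap_eq (hQ : ∀ x y, 0 ≤ Q x y) (hseq : IsSequentialKnockoff Q)
    (S : Finset ι) (z : (∀ i, α i) × (∀ i, α i)) : uncurry Q (groupSwap S z) = uncurry Q z := by
  induction S using Finset.induction_on generalizing z with
  | empty => rw [groupSwap_empty]
  | insert m S hm ih =>
    rw [groupSwap_insert hm, uncurry_groupSwap_singleton_eq hQ hseq, ih]

end Sequential

theorem sequential_group_knockoff_exchangeable_general
    {M : ℕ} (α : Fin M → Type*) [∀ m, Fintype (α m)] [∀ m, DecidableEq (α m)]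
    (Q : (∀ m, α m) → (∀ m, α m) → ℝ)
    (hQ0 : ∀ x y, 0 ≤ Q x y)
    (hseq : ∀ (m : Fin M) (x xt : ∀ i, α i) (a b : α m),
      (∑ u : ∀ i, α i, ∑ y : ∀ i, α i,
          if (∀ i, i ≠ m → u i = x i) ∧ u m = a ∧
              (∀ i, i < m → y i = xt i) ∧ y m = b
            then Q u y else 0) *
        (∑ u : ∀ i, α i, ∑ y : ∀ i, α i,
          if (∀ i, i ≠ m → u i = x i) ∧ (∀ i, i < m → y i = xt i)
            then Q u y else 0)
      =
      (∑ u : ∀ i, α i, ∑ y : ∀ i, α i,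
          if (∀ i, i ≠ m → u i = x i) ∧ u m = a ∧ (∀ i, i < m → y i = xt i)
            then Q u y else 0) *
        (∑ u : ∀ i, α i, ∑ y : ∀ i, α i,
          if (∀ i, i ≠ m → u i = x i) ∧ u m = b ∧ (∀ i, i < m → y i = xt i)
            then Q u y else 0)) :
    ∀ S : Finset (Fin M), ∀ x xt : ∀ i, α i,
      Q (fun m => if m ∈ S then xt m else x m) (fun m => if m ∈ S then x m else xt m)
        = Q x xt := by
  have hsequential : IsSequentialKnockoff Q := by
    rintro k ⟨x, xt⟩
    -- at `a = x k`, `b = xt k` the four sums in `hseq` are the four marginals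
    convert hseq k x xt (x k) (xt k) using 2 <;> unfold marginal <;>
      refine sum_congr rfl fun u _ => sum_congr rfl fun y _ => ?_ <;> congr 1 <;>
      apply propext <;>
      simp only [groupSwap, ← Set.Iio_insert, Set.forall_mem_insert, Set.mem_univ, forall_const,
        Set.mem_Iio, Finset.mem_singleton] <;> grind
  exact fun S x xt => uncurry_groupSwap_eq hQ0 hsequential S (x, xt)

/-- Group Model-X knockoff exchangeability for the sequential construction (finite
probability space formulation). Let `Q` be the joint mass function of `(X, X̃)`, where
`X̃` is constructed sequentially: for each group `m`, given the context
`(X_{−G_m}, X̃_{G_1},…,X̃_{G_{m−1}})`, the pair `(X_{G_m}, X̃_{G_m})` is conditionally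
independent with `X̃_{G_m}` distributed as the conditional law of `X_{G_m}` given the
context (hypothesis `hseq`, in cross-multiplied mass-function form). Then for every
`S ⊆ [M]`, `(X, X̃)_{GSwap(S)}` has the same distribution as `(X, X̃)`. -/
theorem sequential_group_knockoff_exchangeable
    {M : ℕ} (α : Fin M → Type*) [∀ m, Fintype (α m)] [∀ m, DecidableEq (α m)]
    (Q : (∀ m, α m) → (∀ m, α m) → ℝ)
    (hQ0 : ∀ x y, 0 ≤ Q x y)
    (hQ1 : ∑ x : ∀ m, α m, ∑ y : ∀ m, α m, Q x y = 1)
    (hseq : ∀ (m : Fin M) (x xt : ∀ i, α i) (a b : α m),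
      (∑ u : ∀ i, α i, ∑ y : ∀ i, α i,
          if (∀ i, i ≠ m → u i = x i) ∧ u m = a ∧
              (∀ i, i < m → y i = xt i) ∧ y m = b
            then Q u y else 0) *
        (∑ u : ∀ i, α i, ∑ y : ∀ i, α i,
          if (∀ i, i ≠ m → u i = x i) ∧ (∀ i, i < m → y i = xt i)
            then Q u y else 0)
      =
      (∑ u : ∀ i, α i, ∑ y : ∀ i, α i,
          if (∀ i, i ≠ m → u i = x i) ∧ u m = a ∧ (∀ i, i < m → y i = xt i)
            then Q u y else 0) *
        (∑ u : ∀ i, α i, ∑ y : ∀ i, α i,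
          if (∀ i, i ≠ m → u i = x i) ∧ u m = b ∧ (∀ i, i < m → y i = xt i)
            then Q u y else 0)) :
    ∀ S : Finset (Fin M), ∀ x xt : ∀ i, α i,
      Q (fun m => if m ∈ S then xt m else x m) (fun m => if m ∈ S then x m else xt m)
        = Q x xt :=
  sequential_group_knockoff_exchangeable_general α Q hQ0 hseq
end
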